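/- (Invariance of V_FM under the linear transformation Q) Let K be the triangle with vertices O = (0,0), A = (1,0), B = (a, b) with b > 0, let Q be the linear map with matrix [[1, α], [0, β]] where β > 0 (so Q fixes O and A), and let K̃ = Q(K) be the triangle with vertices O, A, B̃ = (a + αb, βb). If v ∈ V_FM(K), then ṽ = v ∘ Q⁻¹ belongs to V_FM(K̃); that is, ṽ vanishes at the three vertices of K̃ and ∫_{ẽ_i} ∂ṽ/∂ñ ds = 0 for each edge ẽ_i of K̃, where ñ is the outward unit normal of ẽ_i. -/

import Mathlib

open MeasureTheory Real

noncomputable section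

/-- Points of the plane. -/
abbrev Pt : Type := ℝ × ℝ

/-- The closed triangle with vertices `O`, `A`, `B`. -/
def Tri (O A B : Pt) : Set Pt := convexHull ℝ {O, A, B}

/-- The triangle with vertices `O`, `A`, `B` is nondegenerate. -/
def Nondeg (O A B : Pt) : Prop := ¬ Collinear ℝ ({O, A, B} : Set Pt)

/-- Euclidean length of a vector of the plane. -/
def elen (v : Pt) : ℝ := Real.sqrt (v.1 ^ 2 + v.2 ^ 2)

/-- Partial derivative in the `x` direction. -/
def pdx (u : Pt → ℝ) (p : Pt) : ℝ := fderiv ℝ u p (1, 0)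

/-- Partial derivative in the `y` direction. -/
def pdy (u : Pt → ℝ) (p : Pt) : ℝ := fderiv ℝ u p (0, 1)

/-- `‖u‖_K²  = ∫_K u² dxdy`. -/
def l2sq (u : Pt → ℝ) (K : Set Pt) : ℝ := ∫ p in K, (u p) ^ 2

/-- `‖∇u‖_K² = ∫_K (u_x² + u_y²) dxdy`. -/
def h1sq (u : Pt → ℝ) (K : Set Pt) : ℝ := ∫ p in K, ((pdx u p) ^ 2 + (pdy u p) ^ 2)

/-- `‖D²u‖_K² = ∫_K (u_xx² + u_xy² + u_yx² + u_yy²) dxdy`. -/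
def h2sq (u : Pt → ℝ) (K : Set Pt) : ℝ :=
  ∫ p in K, ((pdx (pdx u) p) ^ 2 + (pdy (pdx u) p) ^ 2
    + (pdx (pdy u) p) ^ 2 + (pdy (pdy u) p) ^ 2)

/-- `‖u‖_K`. -/
def l2norm (u : Pt → ℝ) (K : Set Pt) : ℝ := Real.sqrt (l2sq u K)

/-- `‖∇u‖_K`. -/
def h1norm (u : Pt → ℝ) (K : Set Pt) : ℝ := Real.sqrt (h1sq u K)

/-- `‖D²u‖_K`. -/
def h2norm (u : Pt → ℝ) (K : Set Pt) : ℝ := Real.sqrt (h2sq u K)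

/-- `u` is twice continuously differentiable on an open neighborhood of `K`. -/
def Smooth2 (u : Pt → ℝ) (K : Set Pt) : Prop :=
  ∃ U : Set Pt, IsOpen U ∧ K ⊆ U ∧ ContDiffOn ℝ 2 u U

/-- `w` is continuously differentiable on an open neighborhood of `K`. -/
def Smooth1 (w : Pt → ℝ) (K : Set Pt) : Prop :=
  ∃ U : Set Pt, IsOpen U ∧ K ⊆ U ∧ ContDiffOn ℝ 1 w U

/-- Line integral of `g` along the edge from `P` to `Q`:
`∫_e g ds = |Q − P| ∫₀¹ g(P + t(Q−P)) dt`. -/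
def edgeInt (g : Pt → ℝ) (P Q : Pt) : ℝ :=
  elen (Q - P) * ∫ t in (0:ℝ)..1, g (P + t • (Q - P))

/-- Outward unit normal of the edge from `P` to `Q` of the triangle whose third vertex is `R`
(the unit vector perpendicular to `Q − P` pointing away from `R`). -/
def outNormal (P Q R : Pt) : Pt :=
  (if (Q - P).2 * (R - P).1 - (Q - P).1 * (R - P).2 ≤ 0 then (elen (Q - P))⁻¹
    else -(elen (Q - P))⁻¹) • ((Q - P).2, -((Q - P).1))

/-- The normal derivative `∂u/∂n = ∇u ⋅ n` along the edge from `P` to `Q`,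
with `n` the outward normal (w.r.t. third vertex `R`). -/
def normalDeriv (u : Pt → ℝ) (P Q R : Pt) (p : Pt) : ℝ := fderiv ℝ u p (outNormal P Q R)

/-- `u ∈ V_FM(K)` for the triangle `K` with vertices `O`, `A`, `B`: `u` is C² near `K`,
vanishes at the three vertices, and has vanishing mean normal derivative on each edge. -/
def MemVFM (u : Pt → ℝ) (O A B : Pt) : Prop :=
  Smooth2 u (Tri O A B) ∧ u O = 0 ∧ u A = 0 ∧ u B = 0 ∧
  edgeInt (normalDeriv u O A B) O A = 0 ∧
  edgeInt (normalDeriv u A B O) A B = 0 ∧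
  edgeInt (normalDeriv u B O A) B O = 0

/-- `w ∈ V_CR(K)` for the triangle `K` with vertices `O`, `A`, `B`: `w` is C¹ near `K`
and has vanishing mean value on each edge. -/
def MemVCR (w : Pt → ℝ) (O A B : Pt) : Prop :=
  Smooth1 w (Tri O A B) ∧
  edgeInt w O A = 0 ∧ edgeInt w A B = 0 ∧ edgeInt w B O = 0

/-- The longest edge length of the triangle with vertices `O`, `A`, `B`. -/
def longestEdge (O A B : Pt) : ℝ := max (elen (A - O)) (max (elen (B - A)) (elen (O - B)))

/-- The linear map with matrix `[[1, α], [0, β]]`. -/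
def Qmap (α β : ℝ) (p : Pt) : Pt := (p.1 + α * p.2, β * p.2)

/-- The inverse of `Qmap α β` (for `β ≠ 0`). -/
def Qinv (α β : ℝ) (p : Pt) : Pt := (p.1 - (α / β) * p.2, p.2 / β)

-- auxiliary
def QinvL (α β : ℝ) : Pt →L[ℝ] Pt :=
  ((ContinuousLinearMap.fst ℝ ℝ ℝ) - (α/β) • (ContinuousLinearMap.snd ℝ ℝ ℝ)).prod
    ((1/β) • ContinuousLinearMap.snd ℝ ℝ ℝ)

lemma QinvL_eq (α β : ℝ) : ⇑(QinvL α β) = Qinv α β := by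
  funext p; simp [QinvL, Qinv]; ring

lemma sq_sum_pos {u : Pt} (hu : u ≠ 0) : 0 < u.1 ^ 2 + u.2 ^ 2 := by
  have h : ¬(u.1 = 0 ∧ u.2 = 0) := by
    intro ⟨h1, h2⟩; exact hu (Prod.ext h1 h2)
  rcases not_and_or.1 h with h | h <;> positivity

lemma elen_pos {u : Pt} (hu : u ≠ 0) : 0 < elen u := Real.sqrt_pos.2 (sq_sum_pos hu)

/-- decomposition of any vector in the basis {(u.2,-u.1), u} -/
lemma decomp {u : Pt} (hu : u ≠ 0) (w : Pt) :
    ∃ c d : ℝ, w = c • ((u.2, -u.1) : Pt) + d • u := by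
  have hD : u.1 ^ 2 + u.2 ^ 2 ≠ 0 := ne_of_gt (sq_sum_pos hu)
  refine ⟨(w.1 * u.2 - w.2 * u.1) / (u.1 ^ 2 + u.2 ^ 2),
    (w.1 * u.1 + w.2 * u.2) / (u.1 ^ 2 + u.2 ^ 2), ?_⟩
  have : (w.1, w.2) = w := rfl
  rw [← this]
  apply Prod.ext <;> simp [Prod.smul_def] <;> field_simp <;> ring

lemma cont_fd {U : Set Pt} (hU : IsOpen U) {v : Pt → ℝ} (hv : ContDiffOn ℝ 2 v U)
    {P u : Pt} (hseg : ∀ t ∈ Set.Icc (0:ℝ) 1, P + t • u ∈ U) (w : Pt) :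
    ContinuousOn (fun t : ℝ => fderiv ℝ v (P + t • u) w) (Set.Icc 0 1) := by
  have h1 : ContinuousOn (fderiv ℝ v) U :=
    hv.continuousOn_fderiv_of_isOpen hU (by norm_num)
  have h2 : ContinuousOn (fun t : ℝ => fderiv ℝ v (P + t • u)) (Set.Icc 0 1) :=
    h1.comp (by fun_prop) hseg
  exact (ContinuousLinearMap.apply ℝ ℝ w).continuous.comp_continuousOn h2

lemma intble_fd {U : Set Pt} (hU : IsOpen U) {v : Pt → ℝ} (hv : ContDiffOn ℝ 2 v U)
    {P u : Pt} (hseg : ∀ t ∈ Set.Icc (0:ℝ) 1, P + t • u ∈ U) (w : Pt) :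
    IntervalIntegrable (fun t : ℝ => fderiv ℝ v (P + t • u) w) volume 0 1 := by
  apply ContinuousOn.intervalIntegrable
  rw [Set.uIcc_of_le (by norm_num : (0:ℝ) ≤ 1)]
  exact cont_fd hU hv hseg w

/-- FTC along the segment -/
lemma ftc_seg {U : Set Pt} (hU : IsOpen U) {v : Pt → ℝ} (hv : ContDiffOn ℝ 2 v U)
    {P Q : Pt} (hseg : ∀ t ∈ Set.Icc (0:ℝ) 1, P + t • (Q - P) ∈ U) :
    ∫ t in (0:ℝ)..1, fderiv ℝ v (P + t • (Q - P)) (Q - P) = v Q - v P := by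
  have key : ∀ t ∈ Set.uIcc (0:ℝ) 1,
      HasDerivAt (fun s : ℝ => v (P + s • (Q - P)))
        (fderiv ℝ v (P + t • (Q - P)) (Q - P)) t := by
    intro t ht
    rw [Set.uIcc_of_le (by norm_num : (0:ℝ) ≤ 1)] at ht
    have hmem := hseg t ht
    have hdiff : DifferentiableAt ℝ v (P + t • (Q - P)) :=
      ((hv.differentiableOn (by norm_num)).differentiableAt (hU.mem_nhds hmem))
    have hpath : HasDerivAt (fun s : ℝ => P + s • (Q - P)) (Q - P) t := by
      simpa using ((hasDerivAt_id t).smul_const (Q - P)).const_add P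
    exact hdiff.hasFDerivAt.comp_hasDerivAt t hpath
  have := intervalIntegral.integral_eq_sub_of_hasDerivAt key (intble_fd hU hv hseg (Q - P))
  simpa using this

/-- key edge lemma: integral of directional derivative in ANY direction vanishes -/
lemma edge_zero {U : Set Pt} (hU : IsOpen U) {v : Pt → ℝ} (hv : ContDiffOn ℝ 2 v U)
    {P Q : Pt} (R : Pt) (hPQ : Q - P ≠ 0)
    (hseg : ∀ t ∈ Set.Icc (0:ℝ) 1, P + t • (Q - P) ∈ U)
    (hvP : v P = 0) (hvQ : v Q = 0)
    (hedge : edgeInt (normalDeriv v P Q R) P Q = 0) (w : Pt) :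
    ∫ t in (0:ℝ)..1, fderiv ℝ v (P + t • (Q - P)) w = 0 := by
  set u := Q - P with hu
  have hel : elen u ≠ 0 := ne_of_gt (elen_pos hPQ)
  set s : ℝ := if u.2 * (R - P).1 - u.1 * (R - P).2 ≤ 0 then (elen u)⁻¹ else -(elen u)⁻¹ with hs
  have hsne : s ≠ 0 := by
    rw [hs]; split <;> simp [hel]
  -- normal direction integral vanishes
  have hn : ∫ t in (0:ℝ)..1, fderiv ℝ v (P + t • u) ((u.2, -u.1) : Pt) = 0 := by
    have h1 : ∫ t in (0:ℝ)..1, normalDeriv v P Q R (P + t • u) = 0 := by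
      have := hedge
      rw [edgeInt] at this
      rcases mul_eq_zero.1 this with h | h
      · exact absurd h hel
      · exact h
    have h2 : ∀ t : ℝ, normalDeriv v P Q R (P + t • u)
        = s * fderiv ℝ v (P + t • u) ((u.2, -u.1) : Pt) := by
      intro t
      rw [normalDeriv, outNormal]
      rw [ContinuousLinearMap.map_smul]
      rfl
    rw [intervalIntegral.integral_congr (fun t _ => h2 t),
      intervalIntegral.integral_const_mul] at h1
    exact (mul_eq_zero.1 h1).resolve_left hsne
  have ht : ∫ t in (0:ℝ)..1, fderiv ℝ v (P + t • u) u = 0 := by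
    rw [ftc_seg hU hv hseg, hvQ, hvP, sub_zero]
  obtain ⟨c, d, hw⟩ := decomp hPQ w
  have hsplit : ∀ t : ℝ, fderiv ℝ v (P + t • u) w
      = c * fderiv ℝ v (P + t • u) ((u.2, -u.1) : Pt) + d * fderiv ℝ v (P + t • u) u := by
    intro t
    rw [hw, ContinuousLinearMap.map_add, ContinuousLinearMap.map_smul,
      ContinuousLinearMap.map_smul]
    rfl
  rw [intervalIntegral.integral_congr (fun t _ => hsplit t),
    intervalIntegral.integral_add ((intble_fd hU hv hseg _).const_mul c)
      ((intble_fd hU hv hseg _).const_mul d),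
    intervalIntegral.integral_const_mul, intervalIntegral.integral_const_mul, hn, ht]
  ring

lemma seg_mem_hull (O A B P Q : Pt) (hP : P ∈ ({O, A, B} : Set Pt))
    (hQ : Q ∈ ({O, A, B} : Set Pt)) {t : ℝ} (ht : t ∈ Set.Icc (0:ℝ) 1) :
    P + t • (Q - P) ∈ Tri O A B := by
  have hseg : P + t • (Q - P) ∈ segment ℝ P Q := by
    rw [segment_eq_image']
    exact ⟨t, ht, rfl⟩
  exact (convex_convexHull ℝ _).segment_subset (subset_convexHull ℝ _ hP)
    (subset_convexHull ℝ _ hQ) hseg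


lemma edge_transformed (α β : ℝ) {U : Set Pt} (hUo : IsOpen U) {v : Pt → ℝ}
    (hvC : ContDiffOn ℝ 2 v U)
    (Pe Qe : Pt) (Pte Qte Rte : Pt)
    (hP : Qinv α β Pte = Pe) (hQ : Qinv α β Qte = Qe) (hPQ : Qe - Pe ≠ 0)
    (hseg : ∀ t ∈ Set.Icc (0:ℝ) 1, Pe + t • (Qe - Pe) ∈ U)
    (hvP : v Pe = 0) (hvQ : v Qe = 0) (R : Pt)
    (hedge : edgeInt (normalDeriv v Pe Qe R) Pe Qe = 0) :
    ∫ t in (0:ℝ)..1, normalDeriv (v ∘ Qinv α β) Pte Qte Rte (Pte + t • (Qte - Pte)) = 0 := by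
  have key : ∀ t ∈ Set.uIcc (0:ℝ) 1,
      normalDeriv (v ∘ Qinv α β) Pte Qte Rte (Pte + t • (Qte - Pte))
        = fderiv ℝ v (Pe + t • (Qe - Pe)) (QinvL α β (outNormal Pte Qte Rte)) := by
    intro t ht
    rw [Set.uIcc_of_le (by norm_num : (0:ℝ) ≤ 1)] at ht
    have hpt : QinvL α β (Pte + t • (Qte - Pte)) = Pe + t • (Qe - Pe) := by
      rw [map_add, _root_.map_smul, map_sub]
      simp only [QinvL_eq, hP, hQ]
    have hdv : DifferentiableAt ℝ v (QinvL α β (Pte + t • (Qte - Pte))) := by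
      rw [hpt]
      exact (hvC.differentiableOn (by norm_num)).differentiableAt
        (hUo.mem_nhds (hseg t ht))
    have hcomp := fderiv_comp (𝕜 := ℝ) (Pte + t • (Qte - Pte)) hdv
      (QinvL α β).differentiableAt
    rw [normalDeriv, ← QinvL_eq, hcomp, (QinvL α β).fderiv, hpt]
    rfl
  rw [intervalIntegral.integral_congr key]
  exact edge_zero hUo hvC R hPQ hseg hvP hvQ hedge _

/-- invariance of `V_FM` under `Q`: for the triangle `K` with vertices
`(0,0)`, `(1,0)`, `(a,b)` and `Q = [[1,α],[0,β]]` with `β > 0`, if `v ∈ V_FM(K)`, then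
`ṽ = v ∘ Q⁻¹ ∈ V_FM(K̃)` for `K̃` the triangle with vertices `(0,0)`, `(1,0)`,
`(a + αb, βb)`. -/
theorem stmt_17 (a b α β : ℝ) (hb : 0 < b) (hβ : 0 < β)
    (v : Pt → ℝ) (hv : MemVFM v ((0, 0) : Pt) ((1, 0) : Pt) ((a, b) : Pt)) :
    MemVFM (v ∘ Qinv α β) ((0, 0) : Pt) ((1, 0) : Pt) ((a + α * b, β * b) : Pt) := by
  obtain ⟨⟨U, hUo, hKU, hvC⟩, hO, hA, hB, hE1, hE2, hE3⟩ := hv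
  have hβ' : β ≠ 0 := ne_of_gt hβ
  set O : Pt := (0, 0)
  set A : Pt := (1, 0)
  set B : Pt := (a, b)
  set Bt : Pt := (a + α * b, β * b)
  have hQO : Qinv α β O = O := by simp [Qinv, O]
  have hQA : Qinv α β A = A := by simp [Qinv, A]
  have hQB : Qinv α β Bt = B := by
    simp only [Qinv, Bt, B]
    exact Prod.ext (by field_simp; ring) (by field_simp)
  -- images of vertices
  have himg : QinvL α β '' ({O, A, Bt} : Set Pt) = ({O, A, B} : Set Pt) := by
    rw [QinvL_eq]
    simp [Set.image_insert_eq, hQO, hQA, hQB]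
  have hTri : ∀ p ∈ Tri O A Bt, Qinv α β p ∈ Tri O A B := by
    intro p hp
    rw [← QinvL_eq]
    have : QinvL α β p ∈ (QinvL α β : Pt →ₗ[ℝ] Pt) '' (convexHull ℝ {O, A, Bt}) :=
      Set.mem_image_of_mem _ hp
    rw [LinearMap.image_convexHull] at this
    rw [Tri]
    convert this using 2
    exact himg.symm
  refine ⟨⟨Qinv α β ⁻¹' U, ?_, ?_, ?_⟩, ?_, ?_, ?_, ?_, ?_, ?_⟩
  · rw [← QinvL_eq]; exact hUo.preimage (QinvL α β).continuous
  · intro p hp; exact hKU (hTri p hp)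
  · rw [← QinvL_eq]
    exact hvC.comp ((QinvL α β).contDiff.contDiffOn) (fun p hp => hp)
  · show v (Qinv α β O) = 0; rw [hQO]; exact hO
  · show v (Qinv α β A) = 0; rw [hQA]; exact hA
  · show v (Qinv α β Bt) = 0; rw [hQB]; exact hB
  · rw [edgeInt]
    apply mul_eq_zero_of_right
    exact edge_transformed α β hUo hvC O A O A Bt hQO hQA
      (by simp [O, A, Prod.ext_iff])
      (fun t ht => hKU (seg_mem_hull O A B O A (by simp) (by simp) ht)) hO hA B hE1
  · rw [edgeInt]
    apply mul_eq_zero_of_right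
    exact edge_transformed α β hUo hvC A B A Bt O hQA hQB
      (by simp [A, B, Prod.ext_iff]; intro _; exact ne_of_gt hb)
      (fun t ht => hKU (seg_mem_hull O A B A B (by simp) (by simp) ht)) hA hB O hE2
  · rw [edgeInt]
    apply mul_eq_zero_of_right
    exact edge_transformed α β hUo hvC B O Bt O A hQB hQO
      (by simp [O, B, Prod.ext_iff]; intro _; exact ne_of_gt hb)
      (fun t ht => hKU (seg_mem_hull O A B B O (by simp) (by simp) ht)) hB hO A hE3
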